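/- arXiv:math/0206199 — 2 statements merged into one kernel-verified Lean document; each statement's English description precedes it below -/
import Mathlib

section
/- Euler transformation: for complex $a,b,c$ with $c$ not a nonpositive integer and real $x>0$, one has ${}_2F_1(a,b;c;-x) = (1+x)^{c-a-b}\,{}_2F_1(c-a,c-b;c;-x)$. -/
open Complex MeasureTheory

/-- The Gauss hypergeometric series `∑ (a)_k (b)_k / (k! (c)_k) z^k`. -/
noncomputable def gaussSeries (a b c z : ℂ) : ℂ :=
  ∑' k : ℕ, ((ascPochhammer ℂ k).eval a * (ascPochhammer ℂ k).eval b) /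
    ((k.factorial : ℂ) * (ascPochhammer ℂ k).eval c) * z ^ k

/-- The cut plane `ℂ \ [1, ∞)`. -/
def gaussCutPlane : Set ℂ := {z : ℂ | ∀ r : ℝ, 1 ≤ r → z ≠ (r : ℂ)}

/-- `F` is (a family of) analytic continuations of the Gauss hypergeometric function
`₂F₁(a,b;c;·)` to the cut plane `ℂ \ [1,∞)`: for every admissible `c`, `F a b c` is
analytic on the cut plane and agrees with the hypergeometric series on the unit disc. -/
def IsGauss2F1 (F : ℂ → ℂ → ℂ → ℂ → ℂ) : Prop :=
  ∀ a b c : ℂ, (∀ n : ℕ, c ≠ -(n : ℂ)) →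
    AnalyticOn ℂ (F a b c) gaussCutPlane ∧
    ∀ z : ℂ, ‖z‖ < 1 → F a b c z = gaussSeries a b c z

open Complex Finset
namespace EulerAux

noncomputable def pk (x : ℂ) (n : ℕ) : ℂ := (ascPochhammer ℂ n).eval x
@[simp] lemma pk_zero (x : ℂ) : pk x 0 = 1 := by simp [pk]
lemma pk_succ (x : ℂ) (n : ℕ) : pk x (n+1) = pk x n * (x + n) := by
  simp [pk, ascPochhammer_succ_eval]
@[simp] lemma pk_one (x : ℂ) : pk x 1 = x := by simp [pk_succ]
lemma pk_prod (x : ℂ) (n : ℕ) : pk x n = ∏ i ∈ range n, (x + i) := by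
  induction n with
  | zero => simp
  | succ n ih => rw [pk_succ, ih, prod_range_succ]
lemma pk_succ_left (x : ℂ) (n : ℕ) : pk x (n+1) = x * pk (x+1) n := by
  rw [pk_prod, prod_range_succ', pk_prod]
  simp only [Nat.cast_add, Nat.cast_one, Nat.cast_zero, add_zero]
  rw [mul_comm]; congr 1; exact prod_congr rfl fun i _ => by ring

lemma pk_add (x : ℂ) (m n : ℕ) : pk x (m+n) = pk x m * pk (x+m) n := by
  rw [pk_prod, prod_range_add, ← pk_prod]
  congr 1
  rw [pk_prod]
  exact prod_congr rfl fun i _ => by push_cast; ring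

noncomputable def TT (a b c : ℂ) (n k : ℕ) : ℂ :=
  (n.choose k : ℂ) * pk (c-a) k * pk (c-b) k * pk (a+b-c) (n-k) * pk (c+k) (n-k)

noncomputable def GG (a b c : ℂ) (n : ℕ) : ℕ → ℂ
  | 0 => 0
  | (j+1) => -((n.choose j : ℂ) * pk (c-a) (j+1) * pk (c-b) (j+1) * pk (a+b-c) (n-j) * pk (c+j) (n-j))

lemma wz (a b c : ℂ) (n k : ℕ) (hk : k ≤ n + 1) :
    TT a b c (n+1) k - (a+n)*(b+n) * TT a b c n k = GG a b c n (k+1) - GG a b c n k := by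
  match k with
  | 0 =>
    simp only [TT, GG, Nat.cast_zero, add_zero, Nat.sub_zero]
    rw [pk_succ (a+b-c) n, pk_succ c n]
    simp only [Nat.choose_zero_right, Nat.cast_one, Nat.cast_zero, add_zero, pk_zero, pk_one,
      zero_add, one_mul, mul_one]
    push_cast
    ring
  | (j+1) =>
    rcases Nat.lt_or_ge j n with hj | hj
    · -- generic case: n = j + m + 1
      obtain ⟨m, rfl⟩ : ∃ m, n = j + m + 1 := ⟨n - j - 1, by omega⟩
      simp only [TT, GG]
      rw [show j + m + 1 + 1 - (j+1) = m + 1 by omega,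
          show j + m + 1 - (j+1) = m by omega,
          show j + m + 1 - j = m + 1 by omega]
      have pascal : ((j+m+1+1).choose (j+1) : ℂ)
          = ((j+m+1).choose j : ℂ) + ((j+m+1).choose (j+1) : ℂ) := by
        rw [show j+m+1+1 = (j+m+1)+1 from rfl, Nat.choose_succ_succ]
        push_cast; ring
      have hXY : ((m:ℂ)+1) * ((j+m+1).choose j : ℂ)
          = ((j:ℂ)+1) * ((j+m+1).choose (j+1) : ℂ) := by
        have h := Nat.choose_succ_right_eq (j+m+1) j
        rw [show j+m+1-j = m+1 by omega] at h
        have h' : (((j+m+1).choose (j+1) * (j+1) : ℕ) : ℂ)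
            = (((j+m+1).choose j * (m+1) : ℕ) : ℂ) := by rw [h]
        push_cast at h'
        linear_combination -h'
      rw [pascal]
      push_cast
      rw [show c + ((j:ℂ) + 1) = c + (j:ℂ) + 1 by ring]
      rw [pk_succ (a+b-c) m, pk_succ (c+(j:ℂ)+1) m, pk_succ (c-a) (j+1), pk_succ (c-b) (j+1),
          pk_succ_left (c+(j:ℂ)) m]
      push_cast
      linear_combination (pk (c-a) (j+1) * pk (c-b) (j+1) * pk (a+b-c) m * pk (c+(j:ℂ)+1) m
        * (a+b-c+(m:ℂ))) * hXY
    · -- j = n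
      have hjn : j = n := by omega
      subst hjn
      simp only [TT, GG]
      rw [show j + 1 - (j+1) = 0 by omega, show j - (j+1) = 0 by omega, show j - j = 0 by omega]
      simp [Nat.choose_succ_self, Nat.choose_self]

end EulerAux

namespace EulerAux2
open EulerAux
lemma pfs (a b c : ℂ) (n : ℕ) :
    ∑ k ∈ range (n+1), TT a b c n k = pk a n * pk b n := by
  induction n with
  | zero => simp [TT]
  | succ n ih =>
    have key : ∀ k ∈ range (n+2), TT a b c (n+1) k
        = (a+n)*(b+n) * TT a b c n k + (GG a b c n (k+1) - GG a b c n k) := by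
      intro k hk
      have h := wz a b c n k (by simp only [mem_range] at hk; omega)
      linear_combination h
    rw [Finset.sum_congr rfl key, Finset.sum_add_distrib, ← Finset.mul_sum,
      Finset.sum_range_sub (GG a b c n)]
    have h1 : ∑ k ∈ range (n+2), TT a b c n k = ∑ k ∈ range (n+1), TT a b c n k := by
      rw [Finset.sum_range_succ]
      simp [TT, Nat.choose_succ_self]
    have h2 : GG a b c n (n+2) = 0 := by
      simp [GG, Nat.choose_succ_self]
    rw [h1, h2, ih, show GG a b c n 0 = 0 from rfl]
    rw [pk_succ a n, pk_succ b n]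
    ring
end EulerAux2

namespace EulerAux3
open EulerAux EulerAux2

noncomputable def gc (a b c : ℂ) (k : ℕ) : ℂ := pk a k * pk b k / ((k.factorial : ℂ) * pk c k)

noncomputable def bc (e : ℂ) (m : ℕ) : ℂ := pk e m / (m.factorial : ℂ)

lemma pk_ne_zero {c : ℂ} (hc : ∀ n : ℕ, c ≠ -(n : ℂ)) (n : ℕ) : pk c n ≠ 0 := by
  rw [pk_prod]
  refine Finset.prod_ne_zero_iff.2 fun i _ h => hc i (by linear_combination h)

lemma pfs_div (a b c : ℂ) (hc : ∀ n : ℕ, c ≠ -(n : ℂ)) (n : ℕ) :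
    ∑ k ∈ range (n+1), gc (c-a) (c-b) c k * bc (a+b-c) (n-k) = gc a b c n := by
  have key : ∀ k ∈ range (n+1), gc (c-a) (c-b) c k * bc (a+b-c) (n-k)
      = TT a b c n k / ((n.factorial : ℂ) * pk c n) := by
    intro k hk
    rw [mem_range] at hk
    have hkn : k ≤ n := by omega
    have hfac : ((n.factorial : ℕ) : ℂ)
        = (n.choose k : ℂ) * (k.factorial : ℂ) * ((n-k).factorial : ℂ) := by
      rw [← Nat.choose_mul_factorial_mul_factorial hkn]
      push_cast; ring
    have hsplit : pk c n = pk c k * pk (c + k) (n-k) := by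
      rw [← pk_add]
      congr 1
      omega
    rw [gc, bc, TT, hfac, hsplit]
    have h1 : ((k.factorial : ℕ) : ℂ) ≠ 0 := Nat.cast_ne_zero.2 k.factorial_ne_zero
    have h2 : (((n-k).factorial : ℕ) : ℂ) ≠ 0 := Nat.cast_ne_zero.2 (n-k).factorial_ne_zero
    have h3 : pk c k ≠ 0 := pk_ne_zero hc k
    have h4 : pk (c + k) (n - k) ≠ 0 := by
      refine pk_ne_zero (fun i h => ?_) (n-k)
      exact hc (k + i) (by push_cast; linear_combination h)
    have h5 : (n.choose k : ℂ) ≠ 0 := Nat.cast_ne_zero.2 (Nat.choose_pos hkn).ne'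
    field_simp
  rw [Finset.sum_congr rfl key, ← Finset.sum_div, pfs, gc]

end EulerAux3

namespace EulerAux4
open EulerAux EulerAux2 EulerAux3 Filter Topology

lemma tendsto_inv_nat : Tendsto (fun k : ℕ => (1:ℂ)/((k:ℂ)+1)) atTop (𝓝 0) := by
  have h := (tendsto_one_div_add_atTop_nhds_zero_nat : Tendsto (fun n : ℕ => (1:ℝ)/((n:ℝ)+1)) atTop (𝓝 0))
  have h2 : Tendsto (fun n : ℕ => (((1:ℝ)/((n:ℝ)+1) : ℝ) : ℂ)) atTop (𝓝 ((0:ℝ):ℂ)) :=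
    (Complex.continuous_ofReal.tendsto _).comp h
  simpa using h2

lemma tendsto_ratio (w v : ℂ) : Tendsto (fun k : ℕ => (w + k)/(v + k)) atTop (𝓝 1) := by
  have heq : ∀ k : ℕ, (w + k)/(v + k)
      = ((w-1) * (1/((k:ℂ)+1)) + 1)/((v-1) * (1/((k:ℂ)+1)) + 1) := by
    intro k
    have hk : ((k:ℂ)) + 1 ≠ 0 := by
      have := Nat.cast_add_one_ne_zero (R := ℂ) k
      push_cast at this ⊢; exact this
    have h1 : (w-1) * (1/((k:ℂ)+1)) + 1 = (w + k)/((k:ℂ)+1) := by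
      field_simp
      ring
    have h2 : (v-1) * (1/((k:ℂ)+1)) + 1 = (v + k)/((k:ℂ)+1) := by
      field_simp
      ring
    rw [h1, h2]
    rcases eq_or_ne (v + (k:ℂ)) 0 with h | h
    · rw [h]; simp
    · field_simp
  simp_rw [heq]
  have hnum : Tendsto (fun k : ℕ => (w-1) * (1/((k:ℂ)+1)) + 1) atTop (𝓝 1) := by
    have := (tendsto_inv_nat.const_mul (w-1)).add (tendsto_const_nhds (x := (1:ℂ)))
    simpa using this
  have hden : Tendsto (fun k : ℕ => (v-1) * (1/((k:ℂ)+1)) + 1) atTop (𝓝 1) := by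
    have := (tendsto_inv_nat.const_mul (v-1)).add (tendsto_const_nhds (x := (1:ℂ)))
    simpa using this
  have h := hnum.div hden one_ne_zero
  rwa [div_one] at h

end EulerAux4

namespace EulerAux5
open EulerAux EulerAux2 EulerAux3 EulerAux4 Filter Topology

lemma gc_succ (a b c : ℂ) (hc : ∀ n : ℕ, c ≠ -(n : ℂ)) (k : ℕ) :
    gc a b c (k+1) = gc a b c k * ((a+k)/(1+(k:ℂ))) * ((b+k)/(c+(k:ℂ))) := by
  have h1 : ((k.factorial : ℕ) : ℂ) ≠ 0 := Nat.cast_ne_zero.2 k.factorial_ne_zero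
  have h3 : pk c k ≠ 0 := pk_ne_zero hc k
  have h4 : c + (k:ℂ) ≠ 0 := fun h => hc k (by linear_combination h)
  have h5 : (1:ℂ) + (k:ℂ) ≠ 0 := by
    have := Nat.cast_add_one_ne_zero (R := ℂ) k
    push_cast at this ⊢
    intro h; exact this (by linear_combination h)
  rw [gc, gc, pk_succ a k, pk_succ b k, pk_succ c k, Nat.factorial_succ,
    div_mul_div_comm, div_mul_div_comm]
  congr 1
  · push_cast; ring
  · push_cast; ring

lemma summable_gc (a b c : ℂ) (hc : ∀ n : ℕ, c ≠ -(n : ℂ)) {z : ℂ} (hz : ‖z‖ < 1) :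
    Summable (fun k => ‖gc a b c k * z ^ k‖) := by
  set r : ℝ := (1 + ‖z‖)/2 with hr
  have hr1 : r < 1 := by rw [hr]; linarith
  have hzr : ‖z‖ < r := by rw [hr]; linarith
  apply summable_of_ratio_norm_eventually_le hr1
  have htend : Tendsto (fun k : ℕ => ‖(a+(k:ℂ))/(1+(k:ℂ))‖ * ‖(b+(k:ℂ))/(c+(k:ℂ))‖ * ‖z‖)
      atTop (𝓝 ‖z‖) := by
    have h1 := (tendsto_ratio a 1).norm
    have h2 := (tendsto_ratio b c).norm
    have := (h1.mul h2).mul (tendsto_const_nhds (x := ‖z‖))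
    simpa using this
  filter_upwards [htend.eventually_le_const hzr] with k hk
  have heq : gc a b c (k+1) * z^(k+1)
      = (gc a b c k * z^k) * (((a+k)/(1+(k:ℂ))) * ((b+k)/(c+(k:ℂ))) * z) := by
    rw [gc_succ a b c hc k, pow_succ]; ring
  rw [Real.norm_of_nonneg (norm_nonneg _), Real.norm_of_nonneg (norm_nonneg _), heq, norm_mul]
  have : ‖(a+(k:ℂ))/(1+(k:ℂ)) * ((b+(k:ℂ))/(c+(k:ℂ))) * z‖
      = ‖(a+(k:ℂ))/(1+(k:ℂ))‖ * ‖(b+(k:ℂ))/(c+(k:ℂ))‖ * ‖z‖ := by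
    rw [norm_mul, norm_mul]
  rw [this]
  calc ‖gc a b c k * z ^ k‖ * (‖(a+(k:ℂ))/(1+(k:ℂ))‖ * ‖(b+(k:ℂ))/(c+(k:ℂ))‖ * ‖z‖)
      ≤ ‖gc a b c k * z ^ k‖ * r := by
        exact mul_le_mul_of_nonneg_left hk (norm_nonneg _)
    _ = r * ‖gc a b c k * z ^ k‖ := by ring

end EulerAux5

namespace EulerAux6
open EulerAux EulerAux2 EulerAux3 EulerAux4 EulerAux5 Filter Topology Metric

lemma one_ne_negnat : ∀ n : ℕ, (1:ℂ) ≠ -(n : ℂ) := by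
  intro n h
  have h2 : ((1:ℝ):ℂ) = ((-(n:ℝ) : ℝ):ℂ) := by push_cast; exact h
  have := Complex.ofReal_inj.1 h2
  have hn : (0:ℝ) ≤ (n:ℝ) := n.cast_nonneg
  linarith

lemma bc_eq_gc (e : ℂ) (m : ℕ) : bc e m = gc e 1 1 m := by
  rw [bc, gc]
  have h : pk (1:ℂ) m ≠ 0 := pk_ne_zero one_ne_negnat m
  have h2 : ((m.factorial : ℕ) : ℂ) ≠ 0 := Nat.cast_ne_zero.2 m.factorial_ne_zero
  field_simp

lemma summable_bc (e : ℂ) {z : ℂ} (hz : ‖z‖ < 1) :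
    Summable (fun m => ‖bc e m * z ^ m‖) := by
  simp_rw [bc_eq_gc]
  exact summable_gc e 1 1 one_ne_negnat hz

lemma bc_succ (e : ℂ) (m : ℕ) : bc e (m+1) = bc e m * ((e+m)/(1+(m:ℂ))) := by
  rw [bc, bc, pk_succ, Nat.factorial_succ, div_mul_div_comm]
  congr 1
  push_cast; ring

lemma bc_rec (e : ℂ) (m : ℕ) : ((m:ℂ)+1) * bc e (m+1) = (e+m) * bc e m := by
  rw [bc_succ]
  have h : (1:ℂ) + (m:ℂ) ≠ 0 := fun h => one_ne_negnat m (by linear_combination h)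
  field_simp
  ring

noncomputable def uu (e : ℂ) (n : ℕ) : ℝ := (n:ℝ) * ‖bc e n‖ * (2⁻¹:ℝ)^(n-1)

lemma uu_nonneg (e : ℂ) (n : ℕ) : 0 ≤ uu e n := by
  apply mul_nonneg (mul_nonneg (by positivity) (norm_nonneg _)) (by positivity)

lemma summable_uu (e : ℂ) : Summable (uu e) := by
  apply summable_of_ratio_norm_eventually_le (r := (3/4 : ℝ)) (by norm_num)
  have htend : Tendsto (fun n : ℕ => ‖(e+(n:ℂ))/(0+(n:ℂ))‖ * 2⁻¹) atTop (𝓝 (1 * 2⁻¹)) :=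
    by simpa using (tendsto_ratio e 0).norm.mul_const (2⁻¹:ℝ)
  filter_upwards [htend.eventually_le_const (by norm_num : (1:ℝ) * 2⁻¹ < 3/4),
    eventually_ge_atTop 1] with n hn hn1
  obtain ⟨m, rfl⟩ : ∃ m, n = m + 1 := ⟨n - 1, by omega⟩
  have hkey : uu e (m+1+1) = (‖(e+((m+1:ℕ):ℂ))/(0+((m+1:ℕ):ℂ))‖ * 2⁻¹) * uu e (m+1) := by
    have hbn : ‖((((m+1:ℕ)):ℂ)+1)‖ * ‖bc e (m+1+1)‖ = ‖e+((m+1:ℕ):ℂ)‖ * ‖bc e (m+1)‖ := by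
      rw [← norm_mul, ← norm_mul, bc_rec e (m+1)]
    have hn1 : ‖(((m+1:ℕ):ℂ)+1)‖ = (m:ℝ) + 2 := by
      rw [show (((m+1:ℕ):ℂ)+1) = (((m+2:ℕ)):ℂ) by push_cast; ring, Complex.norm_natCast]
      push_cast; ring
    have hn2 : ‖(0 : ℂ)+(((m+1:ℕ)):ℂ)‖ = (m:ℝ) + 1 := by
      rw [zero_add, Complex.norm_natCast]
      push_cast; ring
    rw [hn1] at hbn
    rw [uu, uu, norm_div, hn2, show m+1+1-1 = m+1 by omega, show m+1-1 = m by omega, pow_succ]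
    have hm1 : (m:ℝ) + 1 ≠ 0 := by positivity
    set A := ‖bc e (m+1+1)‖ with hA
    set B := ‖bc e (m+1)‖ with hB
    set C := ‖e + ((m+1:ℕ):ℂ)‖ with hC
    set x := (2⁻¹:ℝ)^m with hx
    push_cast
    field_simp
    linear_combination (2⁻¹:ℝ)^m * hbn
  rw [Real.norm_of_nonneg (uu_nonneg _ _), Real.norm_of_nonneg (uu_nonneg _ _), hkey]
  exact mul_le_mul_of_nonneg_right hn (uu_nonneg _ _)

end EulerAux6

namespace EulerAux7
open EulerAux EulerAux3 EulerAux4 EulerAux5 EulerAux6 Filter Topology Metric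

noncomputable def VV (e : ℂ) (z : ℂ) : ℂ := ∑' n, bc e n * z ^ n
noncomputable def DD (e : ℂ) (z : ℂ) : ℂ := ∑' n, bc e n * ((n:ℂ) * z ^ (n-1))

lemma deriv_bound (e : ℂ) {z : ℂ} (hz : ‖z‖ ≤ 2⁻¹) (n : ℕ) :
    ‖bc e n * ((n:ℂ) * z ^ (n-1))‖ ≤ uu e n := by
  have h : ‖bc e n * ((n:ℂ) * z ^ (n-1))‖ = (n:ℝ) * ‖bc e n‖ * ‖z‖^(n-1) := by
    rw [norm_mul, norm_mul, norm_pow, Complex.norm_natCast]; ring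
  rw [h, uu]
  exact mul_le_mul_of_nonneg_left (pow_le_pow_left₀ (norm_nonneg z) hz (n-1))
    (by positivity)

lemma summable_deriv (e : ℂ) {z : ℂ} (hz : ‖z‖ ≤ 2⁻¹) :
    Summable (fun n => bc e n * ((n:ℂ) * z ^ (n-1))) :=
  Summable.of_norm_bounded (summable_uu e) (deriv_bound e hz)

lemma hasDerivAt_VV (e : ℂ) {z : ℂ} (hz : z ∈ ball (0:ℂ) 2⁻¹) :
    HasDerivAt (VV e) (DD e z) z := by
  apply hasDerivAt_tsum_of_isPreconnected (summable_uu e) isOpen_ball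
    (convex_ball _ _).isPreconnected
    (fun n y _ => (hasDerivAt_pow n y).const_mul (bc e n))
    (fun n y hy => deriv_bound e (mem_ball_zero_iff.1 hy).le n)
    (mem_ball_self (by norm_num))
    ?_ hz
  apply summable_of_ne_finset_zero (s := {0})
  intro n hn
  simp only [Finset.mem_singleton] at hn
  rw [zero_pow hn, mul_zero]

lemma ode (e : ℂ) {z : ℂ} (hz : ‖z‖ < 2⁻¹) : (1 - z) * DD e z = e * VV e z := by
  have hz1 : ‖z‖ < 1 := hz.trans (by norm_num)
  have sD := summable_deriv e hz.le
  have sV : Summable (fun n => bc e n * z^n) := (summable_bc e hz1).of_norm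
  have sZ : Summable (fun n => bc e n * ((n:ℂ) * z^n)) := by
    apply Summable.of_norm_bounded (summable_uu e)
    intro n
    have h : ‖bc e n * ((n:ℂ) * z ^ n)‖ = (n:ℝ) * ‖bc e n‖ * ‖z‖^n := by
      rw [norm_mul, norm_mul, norm_pow, Complex.norm_natCast]; ring
    rw [h, uu]
    have h2 : ‖z‖^n ≤ (2⁻¹:ℝ)^(n-1) :=
      le_trans (pow_le_pow_left₀ (norm_nonneg z) hz.le n)
        (pow_le_pow_of_le_one (by norm_num) (by norm_num) (Nat.sub_le n 1))
    exact mul_le_mul_of_nonneg_left h2 (by positivity)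
  have hD : DD e z = ∑' n, bc e (n+1) * (((n:ℂ)+1) * z^n) := by
    rw [DD, Summable.tsum_eq_zero_add sD]
    simp only [Nat.cast_zero, zero_mul, mul_zero, zero_add]
    exact tsum_congr fun n => by rw [Nat.add_sub_cancel]; push_cast; ring
  have hzD : z * DD e z = ∑' n, bc e n * ((n:ℂ) * z^n) := by
    rw [DD, ← tsum_mul_left]
    refine tsum_congr fun n => ?_
    cases n with
    | zero => simp
    | succ m => rw [Nat.add_sub_cancel, pow_succ]; push_cast; ring
  have hterm : ∀ n : ℕ, bc e (n+1) * (((n:ℂ)+1) * z^n)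
      = bc e n * ((n:ℂ) * z^n) + e * (bc e n * z^n) := by
    intro n
    have h := bc_rec e n
    linear_combination z^n * h
  calc (1 - z) * DD e z = DD e z - z * DD e z := by ring
  _ = (∑' n, (bc e n * ((n:ℂ)*z^n) + e * (bc e n * z^n))) - ∑' n, bc e n * ((n:ℂ)*z^n) := by
      rw [hzD, hD]
      congr 1
      exact tsum_congr hterm
  _ = ∑' n, e * (bc e n * z^n) := by rw [Summable.tsum_add sZ (sV.mul_left e)]; ring
  _ = e * VV e z := by rw [tsum_mul_left]; rfl

lemma slit (w : ℂ) (hw : ‖w‖ < 2⁻¹) : (1 - w) ∈ Complex.slitPlane := by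
  apply Or.inl
  have h1 : w.re ≤ ‖w‖ := by
    exact Complex.re_le_norm w
  simp only [Complex.sub_re, Complex.one_re]
  linarith

lemma binom (e : ℂ) {z : ℂ} (hz : ‖z‖ < 2⁻¹) : VV e z = (1-z)^(-e) := by
  have hmem : z ∈ ball (0:ℂ) 2⁻¹ := mem_ball_zero_iff.2 hz
  have hd : ∀ w ∈ ball (0:ℂ) 2⁻¹, HasDerivAt (fun u => (1-u)^e * VV e u) 0 w := by
    intro w hw
    have hw2 : ‖w‖ < 2⁻¹ := mem_ball_zero_iff.1 hw
    have hne : (1:ℂ) - w ≠ 0 := Complex.slitPlane_ne_zero (slit w hw2)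
    have h1 : HasDerivAt (fun u : ℂ => (1-u)^e) (e * (1-w)^(e-1) * (-1)) w :=
      HasDerivAt.cpow_const ((hasDerivAt_id w).const_sub 1) (slit w hw2)
    have h2 := h1.mul (hasDerivAt_VV e hw)
    refine h2.congr_deriv (Eq.symm ?_)
    have hsplit : (1-w)^e = (1-w)^(e-1) * (1-w) := by
      calc (1-w)^e = (1-w)^((e-1)+1) := by ring_nf
      _ = (1-w)^(e-1) * (1-w)^(1:ℂ) := Complex.cpow_add _ _ hne
      _ = (1-w)^(e-1) * (1-w) := by rw [Complex.cpow_one]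
    rw [hsplit]
    have hkey := ode e hw2
    linear_combination -((1-w)^(e-1)) * hkey
  have hconst : (1-z)^e * VV e z = (1-(0:ℂ))^e * VV e 0 := by
    apply Convex.is_const_of_fderivWithin_eq_zero (convex_ball (0:ℂ) 2⁻¹)
      (fun w hw => ((hd w hw).differentiableAt).differentiableWithinAt)
      ?_ hmem (mem_ball_self (by norm_num))
    intro w hw
    rw [fderivWithin_of_isOpen isOpen_ball hw, (hd w hw).hasFDerivAt.fderiv]
    ext u
    simp
  have hV0 : VV e 0 = 1 := by
    rw [VV, tsum_eq_single 0 (fun n hn => by rw [zero_pow hn, mul_zero])]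
    simp [bc]
  rw [hV0, sub_zero, Complex.one_cpow, mul_one] at hconst
  have hne : (1:ℂ) - z ≠ 0 := Complex.slitPlane_ne_zero (slit z hz)
  have hcne : (1-z)^e ≠ 0 := by
    rw [Ne, Complex.cpow_eq_zero_iff]
    tauto
  rw [Complex.cpow_neg]
  exact (inv_eq_of_mul_eq_one_right hconst).symm

end EulerAux7

namespace EulerAux8
open EulerAux EulerAux2 EulerAux3 EulerAux4 EulerAux5 EulerAux6 EulerAux7 Finset

lemma gaussSeries_eq (a b c z : ℂ) : gaussSeries a b c z = ∑' k, gc a b c k * z ^ k := rfl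

lemma series_eq (a b c : ℂ) (hc : ∀ n : ℕ, c ≠ -(n:ℂ)) {z : ℂ} (hz : ‖z‖ < 2⁻¹) :
    gaussSeries a b c z = (1-z)^(c-a-b) * gaussSeries (c-a) (c-b) c z := by
  have hz1 : ‖z‖ < 1 := hz.trans (by norm_num)
  have hbin : (1-z)^(c-a-b) = VV (a+b-c) z := by
    rw [binom (a+b-c) hz]
    congr 1
    ring
  have hf : Summable (fun k => ‖gc (c-a) (c-b) c k * z^k‖) := summable_gc _ _ _ hc hz1
  have hg : Summable (fun m => ‖bc (a+b-c) m * z^m‖) := summable_bc _ hz1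
  have key : (∑' k, gc (c-a) (c-b) c k * z^k) * (∑' m, bc (a+b-c) m * z^m)
      = ∑' k, gc a b c k * z^k := by
    rw [tsum_mul_tsum_eq_tsum_sum_antidiagonal_of_summable_norm hf hg]
    apply tsum_congr
    intro n
    rw [Finset.Nat.sum_antidiagonal_eq_sum_range_succ_mk]
    have hterm : ∀ k ∈ range (n+1),
        gc (c-a) (c-b) c k * z^k * (bc (a+b-c) (n-k) * z^(n-k))
        = (gc (c-a) (c-b) c k * bc (a+b-c) (n-k)) * z^n := by
      intro k hk
      rw [mem_range] at hk
      have hp : z^k * z^(n-k) = z^n := by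
        rw [← pow_add]
        congr 1
        omega
      rw [← hp]
      ring
    rw [sum_congr rfl hterm, ← Finset.sum_mul, pfs_div a b c hc n]
  rw [gaussSeries_eq, gaussSeries_eq, hbin, VV, ← key]
  ring

end EulerAux8

namespace EulerAux9
open EulerAux4 Filter Topology Metric Set

lemma cut_compl : gaussCutPlaneᶜ = Complex.ofReal '' (Ici 1) := by
  ext z
  simp only [mem_compl_iff, gaussCutPlane, mem_setOf_eq, not_forall, mem_image, Set.mem_Ici]
  constructor
  · rintro ⟨r, hr, hz⟩
    exact ⟨r, hr, (of_not_not hz).symm⟩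
  · rintro ⟨r, hr, rfl⟩
    exact ⟨r, hr, not_not_intro rfl⟩

lemma isOpen_cut : IsOpen gaussCutPlane := by
  rw [← isClosed_compl_iff, cut_compl]
  exact (Complex.isometry_ofReal.isClosedEmbedding.isClosedMap _ isClosed_Ici)

lemma mem_cut_of_norm_lt_one {z : ℂ} (hz : ‖z‖ < 1) : z ∈ gaussCutPlane := by
  intro r hr h
  rw [h] at hz
  have h1 : |r| < 1 := by simpa using hz
  have := le_abs_self r
  linarith

lemma mem_cut_neg_ofReal {x : ℝ} (hx : 0 < x) : -(x:ℂ) ∈ gaussCutPlane := by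
  intro r hr h
  have h2 : ((-x : ℝ) : ℂ) = ((r:ℝ) : ℂ) := by push_cast; exact h
  have := Complex.ofReal_inj.1 h2
  linarith

lemma isPreconnected_cut : IsPreconnected gaussCutPlane := by
  apply isPreconnected_of_forall (0:ℂ)
  intro y hy
  refine ⟨segment ℝ 0 y, ?_, left_mem_segment ℝ 0 y, right_mem_segment ℝ 0 y,
    (convex_segment 0 y).isPreconnected⟩
  intro w hw
  rw [segment_eq_image] at hw
  obtain ⟨t, ht, rfl⟩ := hw
  simp only [smul_zero, zero_add]
  intro r hr h
  rcases eq_or_lt_of_le ht.1 with h0 | h0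
  · exfalso
    rw [← h0] at h
    simp only [Complex.ofReal_zero, zero_smul] at h
    have hr0 : r = 0 := by exact_mod_cast h.symm
    linarith
  · have hy2 := hy (r / t) (by
      rw [le_div_iff₀ h0]
      nlinarith [ht.2])
    apply hy2
    have ht0 : (t:ℂ) ≠ 0 := by
      simp only [ne_eq, Complex.ofReal_eq_zero]
      exact ne_of_gt h0
    rw [show ((t:ℝ) • y : ℂ) = (t:ℂ) * y by simp [Complex.real_smul]] at h
    rw [Complex.ofReal_div, eq_div_iff ht0]
    rw [← h]
    ring
end EulerAux9


theorem euler_transformation (F : ℂ → ℂ → ℂ → ℂ → ℂ) (hF : IsGauss2F1 F)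
    (a b c : ℂ) (hc : ∀ n : ℕ, c ≠ -(n : ℂ)) (x : ℝ) (hx : 0 < x) :
    F a b c (-(x : ℂ)) = (1 + (x : ℂ)) ^ (c - a - b) * F (c - a) (c - b) c (-(x : ℂ)) := by
  obtain ⟨hA1, hS1⟩ := hF a b c hc
  obtain ⟨hA2, hS2⟩ := hF (c-a) (c-b) c hc
  have hA1' := (EulerAux9.isOpen_cut.analyticOn_iff_analyticOnNhd).1 hA1
  have hA2' := (EulerAux9.isOpen_cut.analyticOn_iff_analyticOnNhd).1 hA2
  have hslit : ∀ z ∈ gaussCutPlane, (1 - z) ∈ Complex.slitPlane := by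
    intro z hz
    rw [Complex.mem_slitPlane_iff]
    by_contra hcon
    push_neg at hcon
    obtain ⟨h1, h2⟩ := hcon
    rw [Complex.sub_re, Complex.one_re] at h1
    rw [Complex.sub_im, Complex.one_im] at h2
    have him : z.im = 0 := by linarith [h2]
    have hre : 1 ≤ z.re := by linarith [h1]
    exact hz z.re hre (Complex.ext (Complex.ofReal_re z.re).symm
      (by rw [Complex.ofReal_im]; exact him))
  have hRa : AnalyticOnNhd ℂ (fun z => (1-z)^(c-a-b) * F (c-a) (c-b) c z) gaussCutPlane := by
    apply AnalyticOnNhd.mul ?_ hA2'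
    exact AnalyticOnNhd.cpow (analyticOnNhd_const.sub analyticOnNhd_id) analyticOnNhd_const hslit
  have heq : F a b c =ᶠ[nhds (0:ℂ)] fun z => (1-z)^(c-a-b) * F (c-a) (c-b) c z := by
    filter_upwards [Metric.ball_mem_nhds (0:ℂ) (by norm_num : (0:ℝ) < 2⁻¹)] with z hz
    have hz2 : ‖z‖ < 2⁻¹ := mem_ball_zero_iff.1 hz
    have hz1 : ‖z‖ < 1 := hz2.trans (by norm_num)
    rw [hS1 z hz1, hS2 z hz1, EulerAux8.series_eq a b c hc hz2]
  have h0 : (0:ℂ) ∈ gaussCutPlane := EulerAux9.mem_cut_of_norm_lt_one (by norm_num)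
  have hxc : -(x:ℂ) ∈ gaussCutPlane := EulerAux9.mem_cut_neg_ofReal hx
  have hfin := hA1'.eqOn_of_preconnected_of_eventuallyEq hRa EulerAux9.isPreconnected_cut
    h0 heq hxc
  rw [hfin]
  simp only [sub_neg_eq_add]
end

section
/- Gamma ratio asymptotics: for fixed complex $a, b$, $\frac{\Gamma(z+a)}{\Gamma(z+b)} \cdot z^{b-a} \to 1$ as $z \to \infty$ along the positive real axis. -/
open Filter MeasureTheory Set
open scoped Topology

namespace GammaRatioAux

/-- Substitution `x = t/z` in the Beta integral. -/
lemma cpow_mul_betaIntegral (a : ℂ) {z : ℝ} (hz : 0 < z) :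
    (∫ x : ℝ in (0)..z, (((1 - x / z) ^ (z - 1) : ℝ) : ℂ) * (x : ℂ) ^ (a - 1)) =
      (z : ℂ) ^ a * Complex.betaIntegral z a := by
  have hz' : (z : ℝ) ≠ 0 := hz.ne'
  have hzc : (z : ℂ) ≠ 0 := Complex.ofReal_ne_zero.mpr hz'
  have h1 : ∀ x : ℝ, x = x / z * z := fun x => (div_mul_cancel₀ x hz').symm
  conv_lhs => enter [1, x, 2, 1]; rw [h1 x]
  have key := intervalIntegral.integral_comp_div (a := 0) (b := z)
    (fun x => (((1 - x) ^ (z - 1) : ℝ) : ℂ) * (((x * z : ℝ) : ℂ)) ^ (a - 1)) hz'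
  rw [key, zero_div, div_self hz', Complex.betaIntegral_symm a z, Complex.betaIntegral,
    Complex.real_smul, ← intervalIntegral.integral_const_mul, ← intervalIntegral.integral_const_mul]
  simp_rw [intervalIntegral.integral_of_le zero_le_one]
  refine setIntegral_congr_fun measurableSet_Ioc fun x hx => ?_
  have hx0 : (0:ℝ) ≤ x := hx.1.le
  have A : (z : ℂ) * (z:ℂ) ^ (a-1) = (z:ℂ) ^ a := by
    conv_rhs => rw [(by ring : a = 1 + (a-1)), Complex.cpow_add _ _ hzc, Complex.cpow_one]
  have B : ((x * z : ℝ) : ℂ) ^ (a - 1) = (x:ℂ) ^ (a-1) * (z:ℂ) ^ (a-1) := by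
    push_cast
    rw [Complex.mul_cpow_ofReal_nonneg hx0 hz.le]
  have C : (((1 - x) ^ (z - 1) : ℝ) : ℂ) = (1 - (x:ℂ)) ^ ((z:ℂ) - 1) := by
    rw [Complex.ofReal_cpow (by linarith [hx.2] : (0:ℝ) ≤ 1 - x)]
    push_cast
    ring_nf
  rw [B, C, ← A]
  ring

lemma approx_tendsto_Gamma (a : ℂ) (ha : 0 < a.re) :
    Tendsto (fun z : ℝ =>
        ∫ x : ℝ in (0)..z, (((1 - x / z) ^ (z - 1) : ℝ) : ℂ) * (x : ℂ) ^ (a - 1))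
      atTop (𝓝 (Complex.Gamma a)) := by
  rw [Complex.Gamma_eq_integral ha]
  set f : ℝ → ℝ → ℂ := fun z =>
    indicator (Ioc 0 z) fun x : ℝ => (((1 - x / z) ^ (z - 1) : ℝ) : ℂ) * (x : ℂ) ^ (a - 1)
    with hf
  have f_ible : ∀ z : ℝ, 2 ≤ z → Integrable (f z) (volume.restrict (Ioi 0)) := by
    intro z hz2
    have hz0 : (0:ℝ) ≤ z := by linarith
    rw [hf]
    rw [integrable_indicator_iff (measurableSet_Ioc : MeasurableSet (Ioc (0:ℝ) z)), IntegrableOn,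
      Measure.restrict_restrict_of_subset Ioc_subset_Ioi_self, ← IntegrableOn,
      ← intervalIntegrable_iff_integrableOn_Ioc_of_le hz0]
    apply IntervalIntegrable.continuousOn_mul
    · refine intervalIntegral.intervalIntegrable_cpow' ?_
      simp only [Complex.sub_re, Complex.one_re]
      linarith
    · refine Complex.continuous_ofReal.comp_continuousOn ?_
      refine ContinuousOn.rpow_const ?_ fun x _ => Or.inr (by linarith)
      exact (continuous_const.sub (continuous_id'.div_const z)).continuousOn
  -- pointwise limit
  have f_tends : ∀ x : ℝ, x ∈ Ioi (0 : ℝ) →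
      Tendsto (fun z : ℝ => f z x) atTop (𝓝 <| ↑(Real.exp (-x)) * (x : ℂ) ^ (a - 1)) := by
    intro x hx
    rw [mem_Ioi] at hx
    apply Tendsto.congr'
    · show ∀ᶠ z : ℝ in atTop, (((1 - x / z) ^ (z - 1) : ℝ) : ℂ) * (x : ℂ) ^ (a - 1) = f z x
      filter_upwards [eventually_ge_atTop x] with z hz
      rw [hf]
      simp only
      rw [indicator_of_mem (mem_Ioc.mpr ⟨hx, hz⟩)]
    · refine Tendsto.mul_const _ ((Complex.continuous_ofReal.tendsto _).comp ?_)
      -- Tendsto (fun z : ℝ => (1 - x / z) ^ (z - 1)) atTop (𝓝 (Real.exp (-x)))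
      have hbase : Tendsto (fun z : ℝ => 1 + -x / z) atTop (𝓝 1) := by
        have h1 : Tendsto (fun z : ℝ => -x / z) atTop (𝓝 0) :=
          Tendsto.div_atTop (tendsto_const_nhds (x := (-x : ℝ))) tendsto_id
        simpa using (tendsto_const_nhds (x := (1:ℝ))).add h1
      have A := Real.tendsto_one_add_div_rpow_exp (-x)
      have B := A.div hbase one_ne_zero
      rw [div_one] at B
      apply B.congr'
      filter_upwards [eventually_gt_atTop x, eventually_gt_atTop (0:ℝ)] with z hzx hz0
      have hb : (0:ℝ) < 1 + -x / z := by
        rw [neg_div, ← sub_eq_add_neg, sub_pos]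
        exact (div_lt_one hz0).mpr hzx
      simp only [Pi.div_apply]
      have hbb : 1 - x / z = 1 + -x / z := by ring
      rw [hbb, Real.rpow_sub hb, Real.rpow_one]
  -- apply dominated convergence
  have := MeasureTheory.tendsto_integral_filter_of_dominated_convergence
    (μ := volume.restrict (Ioi 0)) (l := atTop) (F := f)
    (bound := fun x : ℝ => x ^ (a.re - 1) * Real.exp (-(1/2) * x))
    (by filter_upwards [eventually_ge_atTop (2:ℝ)] with z hz using (f_ible z hz).1)
    ?_ ?_ ((ae_restrict_iff' measurableSet_Ioi).mpr (ae_of_all _ f_tends))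
  · apply this.congr'
    filter_upwards [eventually_ge_atTop (0:ℝ)] with z hz
    rw [hf]
    simp only
    rw [MeasureTheory.integral_indicator (measurableSet_Ioc : MeasurableSet (Ioc (0:ℝ) z)),
      intervalIntegral.integral_of_le hz,
      Measure.restrict_restrict_of_subset Ioc_subset_Ioi_self]
  · -- bound
    filter_upwards [eventually_ge_atTop (2:ℝ)] with z hz2
    rw [ae_restrict_iff' measurableSet_Ioi]
    filter_upwards with x hx
    rw [mem_Ioi] at hx
    rw [hf]
    simp only
    rcases lt_or_ge z x with hxz | hxz
    · rw [indicator_of_notMem (notMem_Ioc_of_gt hxz), norm_zero]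
      positivity
    · rw [indicator_of_mem (mem_Ioc.mpr ⟨hx, hxz⟩), norm_mul, Complex.norm_real,
        Real.norm_eq_abs, Complex.norm_cpow_eq_rpow_re_of_pos hx,
        Complex.sub_re, Complex.one_re]
      have hz0 : (0:ℝ) < z := by linarith
      have hb0 : (0:ℝ) ≤ 1 - x / z := by
        rw [sub_nonneg]
        exact (div_le_one hz0).mpr hxz
      rw [abs_of_nonneg (Real.rpow_nonneg hb0 _), mul_comm]
      refine mul_le_mul_of_nonneg_left ?_ (Real.rpow_nonneg hx.le _)
      calc (1 - x / z) ^ (z - 1)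
          ≤ Real.exp (-(x / z)) ^ (z - 1) := by
            refine Real.rpow_le_rpow hb0 ?_ (by linarith)
            linarith [Real.add_one_le_exp (-(x/z))]
        _ = Real.exp (-(x / z) * (z - 1)) := (Real.exp_mul _ _).symm
        _ ≤ Real.exp (-(1/2) * x) := by
            rw [Real.exp_le_exp]
            have h : (1/2) * x ≤ x / z * (z - 1) := by
              rw [show x / z * (z - 1) = x * (z - 1) / z by ring, le_div_iff₀ hz0]
              nlinarith
            linarith
  · -- integrability of bound
    have := integrableOn_rpow_mul_exp_neg_mul_rpow (p := 1) (s := a.re - 1) (b := 1/2)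
      (by linarith) zero_lt_one (by norm_num)
    apply this.congr_fun ?_ measurableSet_Ioi
    intro x hx
    simp only [Real.rpow_one]
  done

lemma base_case (a : ℂ) (ha : 0 < a.re) :
    Tendsto (fun z : ℝ => Complex.Gamma (z + a) / Complex.Gamma z * (z : ℂ) ^ (-a))
      atTop (𝓝 1) := by
  have hΓa : Complex.Gamma a ≠ 0 := Complex.Gamma_ne_zero_of_re_pos ha
  have key : Tendsto (fun z : ℝ => (z:ℂ) ^ a * Complex.betaIntegral z a) atTop
      (𝓝 (Complex.Gamma a)) := by
    apply (approx_tendsto_Gamma a ha).congr'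
    filter_upwards [eventually_gt_atTop (0:ℝ)] with z hz
    exact cpow_mul_betaIntegral a hz
  have h2 := (tendsto_const_nhds (x := Complex.Gamma a)).div key hΓa
  rw [div_self hΓa] at h2
  apply h2.congr'
  filter_upwards [eventually_gt_atTop (0:ℝ)] with z hz
  have hzre : 0 < (z:ℂ).re := by simpa using hz
  have hΓz : Complex.Gamma z ≠ 0 := Complex.Gamma_ne_zero_of_re_pos hzre
  have hB := Complex.Gamma_mul_Gamma_eq_betaIntegral hzre ha
  have hBne : Complex.betaIntegral z a ≠ 0 := by
    intro h0
    rw [h0, mul_zero] at hB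
    exact mul_ne_zero hΓz hΓa hB
  have hzc : (z:ℂ) ≠ 0 := by exact_mod_cast hz.ne'
  have hpow : (z:ℂ) ^ a ≠ 0 := by
    rw [Complex.cpow_def_of_ne_zero hzc]; exact Complex.exp_ne_zero _
  have hGa : Complex.Gamma ((z:ℂ) + a) = Complex.Gamma z * Complex.Gamma a /
      Complex.betaIntegral z a := by
    rw [eq_div_iff hBne, ← hB]
  rw [hGa, Complex.cpow_neg]
  simp only [Pi.div_apply]
  field_simp

lemma tendsto_div_add (a : ℂ) :
    Tendsto (fun z : ℝ => (z : ℂ) / ((z : ℂ) + a)) atTop (𝓝 1) := by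
  have h0 : Tendsto (fun z : ℝ => a * ((z : ℂ))⁻¹) atTop (𝓝 0) := by
    have h1 : Tendsto (fun z : ℝ => (((z⁻¹ : ℝ) : ℂ))) atTop (𝓝 0) := by
      rw [show (0:ℂ) = ((0:ℝ):ℂ) by norm_num]
      exact (Complex.continuous_ofReal.tendsto _).comp tendsto_inv_atTop_zero
    have h2 : Tendsto (fun z : ℝ => a * (((z⁻¹ : ℝ) : ℂ))) atTop (𝓝 (a * 0)) :=
      tendsto_const_nhds.mul h1
    rw [mul_zero] at h2
    apply h2.congr
    intro z
    push_cast
    ring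
  have h3 : Tendsto (fun z : ℝ => 1 + a * ((z : ℂ))⁻¹) atTop (𝓝 1) := by
    have := (tendsto_const_nhds (x := (1:ℂ))).add h0
    simpa using this
  have h4 := h3.inv₀ one_ne_zero
  rw [inv_one] at h4
  apply h4.congr'
  filter_upwards [eventually_gt_atTop (max 0 (-a.re))] with z hz
  rw [max_lt_iff] at hz
  obtain ⟨hz0, hza⟩ := hz
  have hzc : (z:ℂ) ≠ 0 := by exact_mod_cast hz0.ne'
  have hzane : (z:ℂ) + a ≠ 0 := by
    intro h0
    have : ((z:ℂ) + a).re = 0 := by rw [h0]; simp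
    rw [Complex.add_re, Complex.ofReal_re] at this
    linarith
  field_simp

lemma aux_ind : ∀ n : ℕ, ∀ a : ℂ, -(n:ℝ) < a.re →
    Tendsto (fun z : ℝ => Complex.Gamma (z + a) / Complex.Gamma z * (z : ℂ) ^ (-a))
      atTop (𝓝 1) := by
  intro n
  induction n with
  | zero => intro a ha; exact base_case a (by simpa using ha)
  | succ n ih =>
    intro a ha
    rcases lt_or_ge 0 a.re with h | h
    · exact base_case a h
    · have ha1 : -(n:ℝ) < (a+1).re := by
        rw [Complex.add_re, Complex.one_re]
        push_cast at ha
        linarith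
      have h1 := ih (a+1) ha1
      have hq := tendsto_div_add a
      have h2 := h1.mul hq
      rw [mul_one] at h2
      apply h2.congr'
      filter_upwards [eventually_gt_atTop (max 0 (-a.re))] with z hz
      rw [max_lt_iff] at hz
      obtain ⟨hz0, hza⟩ := hz
      have hzc : (z:ℂ) ≠ 0 := by exact_mod_cast hz0.ne'
      have hzare : 0 < ((z:ℂ) + a).re := by
        rw [Complex.add_re, Complex.ofReal_re]; linarith
      have hzane : (z:ℂ) + a ≠ 0 := by
        intro h0; rw [h0] at hzare; simp at hzare
      have hΓz : Complex.Gamma (z:ℂ) ≠ 0 := Complex.Gamma_ne_zero_of_re_pos (by simpa using hz0)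
      have hpow : (z:ℂ) ^ a ≠ 0 := by
        rw [Complex.cpow_def_of_ne_zero hzc]; exact Complex.exp_ne_zero _
      have hΓ : Complex.Gamma ((z:ℂ) + (a+1)) = ((z:ℂ) + a) * Complex.Gamma ((z:ℂ) + a) := by
        rw [show (z:ℂ) + (a+1) = ((z:ℂ) + a) + 1 by ring, Complex.Gamma_add_one _ hzane]
      rw [hΓ, show -(a+1) = -a + (-1) by ring, Complex.cpow_add _ _ hzc,
        Complex.cpow_neg, Complex.cpow_neg, Complex.cpow_one]
      field_simp

end GammaRatioAux

open GammaRatioAux in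
theorem gamma_ratio_asymptotics (a b : ℂ) :
    Tendsto (fun z : ℝ =>
      Complex.Gamma (z + a) / Complex.Gamma (z + b) * (z : ℂ) ^ (b - a))
      atTop (nhds 1) := by
  obtain ⟨n, hn⟩ := exists_nat_gt (-a.re)
  obtain ⟨m, hm⟩ := exists_nat_gt (-b.re)
  have Ha := aux_ind n a (by linarith)
  have Hb := aux_ind m b (by linarith)
  have H := Ha.div Hb one_ne_zero
  rw [div_one] at H
  apply H.congr'
  filter_upwards [eventually_gt_atTop (max 0 (-b.re))] with z hz
  rw [max_lt_iff] at hz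
  obtain ⟨hz0, hzb⟩ := hz
  have hzc : (z:ℂ) ≠ 0 := by exact_mod_cast hz0.ne'
  have hzre : 0 < (z:ℂ).re := by simpa using hz0
  have hΓz : Complex.Gamma z ≠ 0 := Complex.Gamma_ne_zero_of_re_pos hzre
  have hzbre : 0 < ((z:ℂ) + b).re := by
    rw [Complex.add_re, Complex.ofReal_re]; linarith
  have hΓzb : Complex.Gamma ((z:ℂ) + b) ≠ 0 := Complex.Gamma_ne_zero_of_re_pos hzbre
  have hpa : (z:ℂ) ^ (-a) ≠ 0 := by
    rw [Complex.cpow_def_of_ne_zero hzc]; exact Complex.exp_ne_zero _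
  have hpb : (z:ℂ) ^ (-b) ≠ 0 := by
    rw [Complex.cpow_def_of_ne_zero hzc]; exact Complex.exp_ne_zero _
  rw [show b - a = -a - -b by ring, Complex.cpow_sub _ _ hzc]
  simp only [Pi.div_apply]
  field_simp
end
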